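/- Let A be a unital C*-algebra, let n ≥ 1, and let a₁, …, aₙ ∈ A be contractions. The following are equivalent: (1) for every ε > 0 there exist b₁, …, bₙ ∈ A with ‖aᵢ − bᵢ‖ < ε for all i and x₁, …, xₙ ∈ A with x₁b₁ + ⋯ + xₙbₙ = 1 (that is, (a₁, …, aₙ) is a limit of tuples that generate A as an ideal); (2) for every ε > 0 there exist contractions v₁, …, vₙ ∈ A and a positive element c ∈ A with ‖c‖ ≤ √n such that ‖aᵢ − vᵢc‖ < ε for all i and ‖v₁*v₁ + ⋯ + vₙ*vₙ − 1‖ < ε; (3) for every ε > 0 there exist contractions v₁, …, vₙ ∈ A and a positive element c ∈ A with ‖c‖ ≤ √n such that ‖aᵢ − vᵢc‖ < ε for all i and ‖v₁*v₁ + ⋯ + vₙ*vₙ − 1‖ < 1. -/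

import Mathlib

/-!
If `∑ xᵢ bᵢ = 1`, then `1 = (∑ xᵢ bᵢ)⋆ (∑ xᵢ bᵢ) ≤ n ∑ ‖xᵢ⋆ xᵢ‖ bᵢ⋆ bᵢ`, so `d = ∑ bᵢ⋆ bᵢ` is
invertible and the polar decomposition `bᵢ = (bᵢ d^(-1/2)) d^(1/2)` has `∑ vᵢ⋆ vᵢ = 1` exactly;
when the `bᵢ` are contractions, `‖d^(1/2)‖² = ‖d‖ ≤ n`. Approximants of the contractions `aᵢ`
become contractions after shrinking by `(1 + δ)⁻¹`, at the cost of doubling the error.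

Conversely, if `‖∑ vᵢ⋆ vᵢ - 1‖ < 1` then `s = ∑ vᵢ⋆ vᵢ` is invertible, and so is `c + δ` for
positive `c` and `δ > 0`; hence the tuple `vᵢ (c + δ)`, which is `δ`-close to `vᵢ c`, generates:
`(c + δ)⁻¹ s⁻¹ ∑ vᵢ⋆ · vᵢ (c + δ) = 1`.
-/

open CFC Finset

lemma exists_sum_mul_eq_one_of_isUnit {R ι : Type*} [Ring R] [Fintype ι] {y v : ι → R} {c : R}
    (hs : IsUnit (∑ i, y i * v i)) (hc : IsUnit c) :
    ∃ x : ι → R, ∑ i, x i * (v i * c) = 1 := by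
  obtain ⟨s, hs⟩ := hs
  obtain ⟨c, rfl⟩ := hc
  refine ⟨fun i => ↑c⁻¹ * (↑s⁻¹ * y i), ?_⟩
  calc ∑ i, ↑c⁻¹ * (↑s⁻¹ * y i) * (v i * c) = ↑c⁻¹ * (↑s⁻¹ * ∑ i, y i * v i) * c := by
        simp only [mul_sum, sum_mul, mul_assoc]
    _ = 1 := by rw [← hs, Units.inv_mul, mul_one, Units.inv_mul]

section Rescale

variable {E : Type*} [SeminormedAddCommGroup E] [NormedSpace ℝ E] {a b : E} {δ : ℝ}

lemma norm_inv_one_add_smul_le_one (hδ : 0 ≤ δ) (ha : ‖a‖ ≤ 1) (hab : ‖a - b‖ ≤ δ) :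
    ‖(1 + δ)⁻¹ • b‖ ≤ 1 := by
  rw [norm_smul, Real.norm_of_nonneg (by positivity), inv_mul_le_one₀ (by positivity)]
  linarith [norm_le_norm_add_norm_sub' b a, norm_sub_rev a b]

lemma norm_sub_inv_one_add_smul_lt (hδ : 0 ≤ δ) (ha : ‖a‖ ≤ 1) (hab : ‖a - b‖ < δ) :
    ‖a - (1 + δ)⁻¹ • b‖ < 2 * δ := by
  have hδr : δ * (1 + δ)⁻¹ = 1 - (1 + δ)⁻¹ := by field_simp; ring
  calc ‖a - (1 + δ)⁻¹ • b‖ = ‖(a - b) + δ • (1 + δ)⁻¹ • b‖ := by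
        rw [smul_smul, hδr, sub_smul, one_smul]; abel_nf
    _ ≤ ‖a - b‖ + δ * ‖(1 + δ)⁻¹ • b‖ :=
        (norm_add_le _ _).trans_eq (by rw [norm_smul δ, Real.norm_of_nonneg hδ])
    _ < δ + δ * 1 :=
        add_lt_add_of_lt_of_le hab
          (mul_le_mul_of_nonneg_left (norm_inv_one_add_smul_le_one hδ ha hab.le) hδ)
    _ = 2 * δ := by ring

end Rescale

section CStarAlgebra

variable {A : Type*} [CStarAlgebra A] [PartialOrder A] [StarOrderedRing A] {ι : Type*} [Fintype ι]

lemma star_sum_mul_sum_le_card_smul (f : ι → A) :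
    star (∑ i, f i) * ∑ i, f i ≤ Fintype.card ι • ∑ i, star (f i) * f i := by
  set X := Fintype.card ι • ∑ i, star (f i) * f i - star (∑ i, f i) * ∑ i, f i
  have hX : ∑ i, ∑ j, star (f i - f j) * (f i - f j) = X + X := by
    simp only [X, star_sub, sub_mul, mul_sub, sum_sub_distrib, sum_const,
      card_univ, ← mul_sum, ← sum_mul, ← star_sum, ← smul_sum]
    abel
  have h2X : 0 ≤ X + X :=
    hX ▸ sum_nonneg fun i _ => sum_nonneg fun j _ => star_mul_self_nonneg (f i - f j)
  have hX2 : X = (2⁻¹ : ℝ) • (X + X) := by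
    rw [← two_smul ℝ X, smul_smul, inv_mul_cancel₀ two_ne_zero, one_smul]
  rw [← sub_nonneg, show _ - _ = X from rfl, hX2]
  exact smul_nonneg (by norm_num) h2X

lemma isUnit_of_nonneg_of_one_le_smul {d : A} (hd : 0 ≤ d) {r : ℝ} (h : 1 ≤ r • d) :
    IsUnit d := by
  nontriviality A
  have hr : 0 < r := by
    by_contra! hr
    exact zero_lt_one.not_ge (h.trans (smul_nonpos_of_nonpos_of_nonneg hr hd))
  refine CStarAlgebra.isUnit_of_le (algebraMap ℝ A r⁻¹) ?_
    (isStrictlyPositive_algebraMap (inv_pos.2 hr))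
  calc algebraMap ℝ A r⁻¹ = r⁻¹ • 1 := Algebra.algebraMap_eq_smul_one _
    _ ≤ r⁻¹ • (r • d) := smul_le_smul_of_nonneg_left h (inv_nonneg.2 hr.le)
    _ = d := inv_smul_smul₀ hr.ne' d

lemma isUnit_sum_star_mul_self_of_sum_mul_eq_one {x b : ι → A} (h : ∑ i, x i * b i = 1) :
    IsUnit (∑ i, star (b i) * b i) := by
  set K := ∑ i, ‖star (x i) * x i‖
  have hK : ∀ i, ‖star (x i) * x i‖ ≤ K := fun i =>
    single_le_sum (f := fun i => ‖star (x i) * x i‖) (fun j _ => norm_nonneg _) (mem_univ i)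
  refine isUnit_of_nonneg_of_one_le_smul (sum_nonneg fun i _ => star_mul_self_nonneg (b i))
    (r := Fintype.card ι * K) ?_
  calc (1 : A) = star (∑ i, x i * b i) * ∑ i, x i * b i := by rw [h, star_one, one_mul]
    _ ≤ Fintype.card ι • ∑ i, star (x i * b i) * (x i * b i) := star_sum_mul_sum_le_card_smul _
    _ ≤ Fintype.card ι • ∑ i, K • (star (b i) * b i) := by
        gcongr with i
        calc star (x i * b i) * (x i * b i) = star (b i) * (star (x i) * x i) * b i := by
              simp only [star_mul, mul_assoc]
          _ ≤ ‖star (x i) * x i‖ • (star (b i) * b i) :=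
              CStarAlgebra.star_left_conjugate_le_norm_smul
          _ ≤ K • (star (b i) * b i) := smul_le_smul_of_nonneg_right (hK i) (star_mul_self_nonneg _)
    _ = ((Fintype.card ι : ℝ) * K) • ∑ i, star (b i) * b i := by
        rw [← smul_sum, mul_smul, Nat.cast_smul_eq_nsmul]

lemma exists_sum_star_mul_self_eq_one_and_mul_sqrt_eq {b : ι → A}
    (hb : IsUnit (∑ i, star (b i) * b i)) :
    ∃ v : ι → A, ∑ i, star (v i) * v i = 1 ∧ ∀ i, v i * sqrt (∑ i, star (b i) * b i) = b i := by
  set d := ∑ i, star (b i) * b i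
  have hd : IsStrictlyPositive d :=
    hb.isStrictlyPositive (sum_nonneg fun i _ => star_mul_self_nonneg _)
  have hw : IsSelfAdjoint (d ^ (-(1 / 2) : ℝ)) := .of_nonneg rpow_nonneg
  refine ⟨fun i => b i * d ^ (-(1 / 2) : ℝ), ?_, fun i => ?_⟩
  · calc ∑ i, star (b i * d ^ (-(1 / 2) : ℝ)) * (b i * d ^ (-(1 / 2) : ℝ))
          = d ^ (-(1 / 2) : ℝ) * d * d ^ (-(1 / 2) : ℝ) := by
          simp only [star_mul, hw.star_eq, d, mul_sum, sum_mul, mul_assoc]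
      _ = 1 := conjugate_rpow_neg_one_half d
  · rw [mul_assoc, sqrt_eq_rpow, rpow_neg_mul_rpow _ hd, mul_one]

lemma norm_le_one_of_sum_star_mul_self_eq_one {v : ι → A} (h : ∑ i, star (v i) * v i = 1)
    (j : ι) : ‖v j‖ ≤ 1 := by
  have hj : star (v j) * v j ≤ 1 :=
    h ▸ single_le_sum (f := fun i => star (v i) * v i) (fun i _ => star_mul_self_nonneg (v i))
      (mem_univ j)
  rw [← CStarAlgebra.norm_le_one_iff_of_nonneg _ (star_mul_self_nonneg _),
    CStarRing.norm_star_mul_self] at hj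
  nlinarith [norm_nonneg (v j)]

lemma norm_sqrt_sum_star_mul_self_le {b : ι → A} (hb : ∀ i, ‖b i‖ ≤ 1) :
    ‖sqrt (∑ i, star (b i) * b i)‖ ≤ √(Fintype.card ι) := by
  rw [norm_sqrt _ (sum_nonneg fun i _ => star_mul_self_nonneg (b i))]
  gcongr
  calc ‖∑ i, star (b i) * b i‖ ≤ ∑ i, ‖star (b i) * b i‖ := norm_sum_le _ _
    _ ≤ ∑ _i : ι, (1 : ℝ) := sum_le_sum fun i _ => by
        rw [CStarRing.norm_star_mul_self]
        exact mul_le_one₀ (hb i) (norm_nonneg _) (hb i)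
    _ = Fintype.card ι := by simp

theorem exists_polar_of_sum_mul_eq_one {x b : ι → A} (hb : ∀ i, ‖b i‖ ≤ 1)
    (hx : ∑ i, x i * b i = 1) :
    ∃ (v : ι → A) (c : A), (∀ i, ‖v i‖ ≤ 1) ∧ 0 ≤ c ∧ ‖c‖ ≤ √(Fintype.card ι) ∧
      (∀ i, v i * c = b i) ∧ ∑ i, star (v i) * v i = 1 := by
  obtain ⟨v, hv, hvc⟩ :=
    exists_sum_star_mul_self_eq_one_and_mul_sqrt_eq (isUnit_sum_star_mul_self_of_sum_mul_eq_one hx)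
  exact ⟨v, _, norm_le_one_of_sum_star_mul_self_eq_one hv, sqrt_nonneg _,
    norm_sqrt_sum_star_mul_self_le hb, hvc, hv⟩

theorem exists_polar_approx_of_sum_mul_eq_one {a x b : ι → A} {δ : ℝ} (hδ : 0 ≤ δ)
    (ha : ∀ i, ‖a i‖ ≤ 1) (hab : ∀ i, ‖a i - b i‖ < δ) (hx : ∑ i, x i * b i = 1) :
    ∃ (v : ι → A) (c : A), (∀ i, ‖v i‖ ≤ 1) ∧ 0 ≤ c ∧ ‖c‖ ≤ √(Fintype.card ι) ∧
      (∀ i, ‖a i - v i * c‖ < 2 * δ) ∧ ∑ i, star (v i) * v i = 1 := by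
  have hδ' : (1 + δ) ≠ 0 := by positivity
  have hx' : ∑ i, ((1 + δ) • x i) * ((1 + δ)⁻¹ • b i) = 1 := by
    simpa only [smul_mul_smul_comm, mul_inv_cancel₀ hδ', one_smul] using hx
  obtain ⟨v, c, hv, hc, hcn, hvc, hvv⟩ :=
    exists_polar_of_sum_mul_eq_one (fun i => norm_inv_one_add_smul_le_one hδ (ha i) (hab i).le) hx'
  exact ⟨v, c, hv, hc, hcn, fun i => hvc i ▸ norm_sub_inv_one_add_smul_lt hδ (ha i) (hab i), hvv⟩

lemma exists_near_sum_mul_eq_one {v : ι → A} {c : A} {δ : ℝ} (hδ : 0 < δ) (hv : ∀ i, ‖v i‖ ≤ 1)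
    (hc : 0 ≤ c) (hvv : ‖∑ i, star (v i) * v i - 1‖ < 1) :
    ∃ b : ι → A, (∀ i, ‖v i * c - b i‖ ≤ δ) ∧ ∃ x : ι → A, ∑ i, x i * b i = 1 := by
  have hs : IsUnit (∑ i, star (v i) * v i) := by
    simpa using isUnit_one_sub_of_norm_lt_one (x := 1 - ∑ i, star (v i) * v i)
      (by rwa [norm_sub_rev])
  have hcδ : IsUnit (c + algebraMap ℝ A δ) :=
    ((isStrictlyPositive_algebraMap hδ).nonneg_add hc).isUnit
  refine ⟨fun i => v i * (c + algebraMap ℝ A δ), fun i => ?_, exists_sum_mul_eq_one_of_isUnit hs hcδ⟩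
  calc ‖v i * c - v i * (c + algebraMap ℝ A δ)‖ = δ * ‖v i‖ := by
        rw [← mul_sub, sub_add_cancel_left, mul_neg, norm_neg, Algebra.algebraMap_eq_smul_one,
          mul_smul_one, norm_smul, Real.norm_of_nonneg hδ.le]
    _ ≤ δ := mul_le_of_le_one_right hδ.le (hv i)

end CStarAlgebra

theorem stmt_1_general {A : Type*} [CStarAlgebra A] (n : ℕ)
    (a : Fin n → A) (ha : ∀ i, ‖a i‖ ≤ 1) :
    [ (∀ ε > (0 : ℝ), ∃ b : Fin n → A, (∀ i, ‖a i - b i‖ < ε) ∧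
        ∃ x : Fin n → A, ∑ i, x i * b i = 1),
      (∀ ε > (0 : ℝ), ∃ (v : Fin n → A) (c : A), (∀ i, ‖v i‖ ≤ 1) ∧
        (∃ y : A, c = star y * y) ∧ ‖c‖ ≤ Real.sqrt n ∧
        (∀ i, ‖a i - v i * c‖ < ε) ∧ ‖(∑ i, star (v i) * v i) - 1‖ < ε),
      (∀ ε > (0 : ℝ), ∃ (v : Fin n → A) (c : A), (∀ i, ‖v i‖ ≤ 1) ∧
        (∃ y : A, c = star y * y) ∧ ‖c‖ ≤ Real.sqrt n ∧
        (∀ i, ‖a i - v i * c‖ < ε) ∧ ‖(∑ i, star (v i) * v i) - 1‖ < 1) ].TFAE := by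
  let _ : PartialOrder A := CStarAlgebra.spectralOrder A
  have _ : StarOrderedRing A := CStarAlgebra.spectralOrderedRing A
  tfae_have 1 → 2 := by
    intro h ε hε
    obtain ⟨b, hab, x, hx⟩ := h (ε / 2) (half_pos hε)
    obtain ⟨v, c, hv, hc, hcn, hac, hvv⟩ :=
      exists_polar_approx_of_sum_mul_eq_one (half_pos hε).le ha hab hx
    refine ⟨v, c, hv, CStarAlgebra.nonneg_iff_eq_star_mul_self.1 hc, by simpa using hcn,
      fun i => by simpa [mul_div_cancel₀] using hac i, by simpa [hvv] using hε⟩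
  tfae_have 2 → 3 := by
    intro h ε hε
    obtain ⟨v, c, hv, hc, hcn, hac, hvv⟩ := h (min ε 1) (lt_min hε one_pos)
    exact ⟨v, c, hv, hc, hcn, fun i => (hac i).trans_le (min_le_left _ _),
      hvv.trans_le (min_le_right _ _)⟩
  tfae_have 3 → 1 := by
    intro h ε hε
    obtain ⟨v, c, hv, ⟨y, rfl⟩, -, hac, hvv⟩ := h (ε / 2) (half_pos hε)
    obtain ⟨b, hb, hx⟩ := exists_near_sum_mul_eq_one (half_pos hε) hv (star_mul_self_nonneg y) hvv
    exact ⟨b, fun i => (norm_sub_le_norm_sub_add_norm_sub _ _ _).trans_lt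
      (by linarith [hac i, hb i]), hx⟩
  tfae_finish

/-- Approximate version: characterization of tuples in the closure of generating tuples. -/
theorem stmt_1 {A : Type*} [CStarAlgebra A] (n : ℕ) (hn : 1 ≤ n)
    (a : Fin n → A) (ha : ∀ i, ‖a i‖ ≤ 1) :
    [ (∀ ε > (0 : ℝ), ∃ b : Fin n → A, (∀ i, ‖a i - b i‖ < ε) ∧
        ∃ x : Fin n → A, ∑ i, x i * b i = 1),
      (∀ ε > (0 : ℝ), ∃ (v : Fin n → A) (c : A), (∀ i, ‖v i‖ ≤ 1) ∧
        (∃ y : A, c = star y * y) ∧ ‖c‖ ≤ Real.sqrt n ∧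
        (∀ i, ‖a i - v i * c‖ < ε) ∧ ‖(∑ i, star (v i) * v i) - 1‖ < ε),
      (∀ ε > (0 : ℝ), ∃ (v : Fin n → A) (c : A), (∀ i, ‖v i‖ ≤ 1) ∧
        (∃ y : A, c = star y * y) ∧ ‖c‖ ≤ Real.sqrt n ∧
        (∀ i, ‖a i - v i * c‖ < ε) ∧ ‖(∑ i, star (v i) * v i) - 1‖ < 1) ].TFAE :=
  stmt_1_general n a ha
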